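/- For every ε ∈ (0,1), the Hausdorff dimensions of the sets of good and bad channels of the binary erasure channel with erasure probability ε satisfy dim_H(G_ε) = 1 and dim_H(B_ε) = 1. -/

import Mathlib

/-! Fix `L ≥ 1` and `M` with `ε ^ 2 ^ M ≤ 4⁻¹ ^ L`. Writing the digits of an arbitrary sequence
after `M` ones, with two more ones after every `L` of its digits, always gives a good channel:
the leading squarings make the erasure probability tiny, each free digit at most doubles it and
each pair of forced squarings raises it to the fourth power, so it decays block by block. The
forced ones also keep the padded expansions apart: sequences first differing at digit `n` land at
distance at least about `2 ^ (-n (L + 2) / L)`, so removing the padding is Hölder of exponent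
`L / (L + 2)` from this subset of `G_ε` onto `[0, 1]`, and `dim_H G_ε ≥ L / (L + 2) → 1`.
Complementing all digits maps `x ↦ 1 - x` and swaps `g_0` and `g_1`, hence sends `G_{1-ε}`
into `B_ε`. -/

open Filter Set MeasureTheory

noncomputable section

/-- `g_0(z) = 2z - z²` (bit `false`), `g_1(z) = z²` (bit `true`). -/
def gBit (c : Bool) (z : ℝ) : ℝ := if c then z ^ 2 else 2 * z - z ^ 2

/-- `pPre b n z = g_{b_n}(g_{b_{n-1}}(⋯ g_{b_1}(z) ⋯))`, where `b_i` is `b (i-1)`. -/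
def pPre (b : ℕ → Bool) : ℕ → ℝ → ℝ
  | 0, z => z
  | n + 1, z => gBit (b n) (pPre b n z)

/-- `f(b) = Σ_{n ≥ 1} b_n 2^{-n}`. -/
def fBin (b : ℕ → Bool) : ℝ := ∑' n : ℕ, (if b n then (1 : ℝ) else 0) / 2 ^ (n + 1)

/-- The dyadic rationals in `[0,1]`. -/
def dyadics : Set ℝ := Set.Icc 0 1 ∩ {x : ℝ | ∃ (p : ℤ) (n : ℕ), x = (p : ℝ) / 2 ^ n}

/-- The good channels of a BEC with erasure probability `ε`: `x ∈ [0,1]` such that some binary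
expansion `b` of `x` satisfies `p_{b^n}(ε) → 0`. -/
def Gset (ε : ℝ) : Set ℝ :=
  {x : ℝ | ∃ b : ℕ → Bool, fBin b = x ∧ Tendsto (fun n => pPre b n ε) atTop (nhds 0)}

/-- The bad channels of a BEC with erasure probability `ε`: `x ∈ [0,1]` such that some binary
expansion `b` of `x` satisfies `p_{b^n}(ε) → 1`. -/
def Bset (ε : ℝ) : Set ℝ :=
  {x : ℝ | ∃ b : ℕ → Bool, fBin b = x ∧ Tendsto (fun n => pPre b n ε) atTop (nhds 1)}

/-- Hamming weight `w(b^n)` of the length-`n` prefix of `b`. -/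
def wPre (b : ℕ → Bool) (n : ℕ) : ℕ := ∑ i ∈ Finset.range n, (if b i then 1 else 0)

/-- `b` is `ρ`-heavy: `liminf_{n→∞} (w(b^n) - nρ) ≥ 0` (the liminf computed in `EReal`),
equivalently `liminf 2^{w(b^n)} / 2^{nρ} ≥ 1`. -/
def Heavy (ρ : ℝ) (b : ℕ → Bool) : Prop :=
  0 ≤ atTop.liminf (fun n : ℕ => (((wPre b n : ℝ) - n * ρ : ℝ) : EReal))

/-- The set of `ρ`-heavy channels. -/
def Hset (ρ : ℝ) : Set ℝ := {x : ℝ | ∃ b : ℕ → Bool, fBin b = x ∧ Heavy ρ b}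


open Function Topology
open scoped NNReal ENNReal

def toDigits (b : ℕ → Bool) : ℕ → Fin 2 := fun i => if b i then 1 else 0

lemma fBin_term_eq_ofDigitsTerm (b : ℕ → Bool) :
    (fun n => (if b n then (1 : ℝ) else 0) / 2 ^ (n + 1)) = Real.ofDigitsTerm (toDigits b) := by
  funext n
  cases h : b n <;> simp [Real.ofDigitsTerm, toDigits, div_eq_mul_inv, h]

lemma fBin_eq_ofDigits (b : ℕ → Bool) : fBin b = Real.ofDigits (toDigits b) := by
  rw [fBin, fBin_term_eq_ofDigitsTerm, Real.ofDigits]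

lemma hasSum_fBin (b : ℕ → Bool) :
    HasSum (fun n => (if b n then (1 : ℝ) else 0) / 2 ^ (n + 1)) (fBin b) := by
  rw [fBin_term_eq_ofDigitsTerm, fBin_eq_ofDigits]
  exact Real.summable_ofDigitsTerm.hasSum

lemma fBin_const_true : fBin (fun _ => true) = 1 := by
  rw [fBin_eq_ofDigits]
  exact Real.ofDigits_const_last_eq_one 1

lemma fBin_mem_Icc (b : ℕ → Bool) : fBin b ∈ Icc (0 : ℝ) 1 := by
  rw [fBin_eq_ofDigits]
  exact ⟨Real.ofDigits_nonneg _, Real.ofDigits_le_one _⟩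

lemma range_fBin : range fBin = Icc 0 1 := by
  refine (range_subset_iff.2 fBin_mem_Icc).antisymm fun x hx => ?_
  obtain ⟨d, -, rfl⟩ := Real.ofDigits_SurjOn one_lt_two hx
  refine ⟨fun i => d i = 1, ?_⟩
  rw [fBin_eq_ofDigits]
  congr 1
  funext i
  simp only [toDigits, decide_eq_true_eq]
  generalize d i = a
  fin_cases a <;> rfl

lemma abs_fBin_sub_le {b b' : ℕ → Bool} {n : ℕ} (h : ∀ i < n, b i = b' i) :
    |fBin b - fBin b'| ≤ (1 / 2) ^ n := by
  rw [fBin_eq_ofDigits, fBin_eq_ofDigits, one_div, inv_pow]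
  exact_mod_cast Real.abs_ofDigits_sub_ofDigits_le fun i hi => by simp [toDigits, h i hi]

lemma fBin_eq_sum_add (b : ℕ → Bool) (n : ℕ) :
    fBin b = ∑ i ∈ Finset.range n, Real.ofDigitsTerm (toDigits b) i
      + (1 / 2) ^ n * fBin (fun i => b (i + n)) := by
  rw [fBin_eq_ofDigits, fBin_eq_ofDigits, Real.ofDigits_eq_sum_add_ofDigits _ n,
    one_div, inv_pow, Nat.cast_ofNat]
  rfl

lemma pow_le_fBin {b : ℕ → Bool} {j : ℕ} (h : b j = true) : (1 / 2 : ℝ) ^ (j + 1) ≤ fBin b := by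
  rw [fBin_eq_ofDigits]
  refine le_of_eq_of_le ?_
    (Real.summable_ofDigitsTerm.le_tsum j fun _ _ => Real.ofDigitsTerm_nonneg)
  simp [Real.ofDigitsTerm, toDigits, h]

lemma pow_le_fBin_sub {b b' : ℕ → Bool} {m i : ℕ} (hag : ∀ k < m, b k = b' k)
    (hbm : b m = true) (hbm' : b' m = false) (hmi : m < i) (hbi : b i = true) :
    (1 / 2 : ℝ) ^ (i + 1) ≤ fBin b - fBin b' := by
  obtain ⟨j, rfl⟩ := Nat.exists_eq_add_of_lt hmi
  have hsum : ∑ k ∈ Finset.range (m + 1), Real.ofDigitsTerm (toDigits b) k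
      = ∑ k ∈ Finset.range (m + 1), Real.ofDigitsTerm (toDigits b') k + (1 / 2) ^ (m + 1) := by
    have hprefix : ∀ k ∈ Finset.range m, Real.ofDigitsTerm (toDigits b) k
        = Real.ofDigitsTerm (toDigits b') k := fun k hk => by
      simp [Real.ofDigitsTerm, toDigits, hag k (Finset.mem_range.1 hk)]
    rw [Finset.sum_range_succ, Finset.sum_range_succ, Finset.sum_congr rfl hprefix,
      add_assoc]
    congr 1
    simp [Real.ofDigitsTerm, toDigits, hbm, hbm']
  have htail : (1 / 2 : ℝ) ^ (j + 1) ≤ fBin fun k => b (k + (m + 1)) :=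
    pow_le_fBin (by rwa [show j + (m + 1) = m + j + 1 by ring])
  have htail' := (fBin_mem_Icc fun k => b' (k + (m + 1))).2
  rw [fBin_eq_sum_add b (m + 1), fBin_eq_sum_add b' (m + 1), hsum]
  calc (1 / 2 : ℝ) ^ (m + j + 1 + 1) = (1 / 2) ^ (m + 1) * (1 / 2) ^ (j + 1) := by ring
    _ ≤ _ := by nlinarith [pow_pos (one_half_pos (α := ℝ)) (m + 1)]

def pad (pos : ℕ → ℕ) (c : ℕ → Bool) : ℕ → Bool := extend pos c fun _ => true

section pad

variable {pos : ℕ → ℕ} {c c' : ℕ → Bool}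

lemma pad_apply_of_injective (hpos : Injective pos) (c : ℕ → Bool) (j : ℕ) :
    pad pos c (pos j) = c j :=
  hpos.extend_apply _ _ _

lemma pad_apply_of_notMem_range {i : ℕ} (hi : i ∉ range pos) : pad pos c i = true :=
  extend_apply' _ _ _ hi

lemma pad_eq_pad_of_lt (hpos : StrictMono pos) {n i : ℕ} (hag : ∀ j < n, c j = c' j)
    (hi : i < pos n) : pad pos c i = pad pos c' i := by
  by_cases h : i ∈ range pos
  · obtain ⟨j, rfl⟩ := h
    rw [pad_apply_of_injective hpos.injective, pad_apply_of_injective hpos.injective,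
      hag j (hpos.lt_iff_lt.1 hi)]
  · rw [pad_apply_of_notMem_range h, pad_apply_of_notMem_range h]

lemma pow_le_fBin_pad_sub (hpos : StrictMono pos) {n i : ℕ} (hag : ∀ j < n, c j = c' j)
    (hc : c n = true) (hc' : c' n = false) (hi : pos n < i) (hi' : i ∉ range pos) :
    (1 / 2 : ℝ) ^ (i + 1) ≤ fBin (pad pos c) - fBin (pad pos c') :=
  pow_le_fBin_sub (fun _ => pad_eq_pad_of_lt hpos hag)
    (by rwa [pad_apply_of_injective hpos.injective])
    (by rwa [pad_apply_of_injective hpos.injective]) hi (pad_apply_of_notMem_range hi')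

end pad

def IsDigitSeparated (A r : ℝ) (F : (ℕ → Bool) → ℝ) : Prop :=
  ∀ c c' (n : ℕ), (∀ j < n, c j = c' j) → c n = true → c' n = false →
    (1 / 2 : ℝ) ^ (A + n / r) ≤ F c - F c'

lemma abs_fBin_sub_le_of_isDigitSeparated {F : (ℕ → Bool) → ℝ} {A r : ℝ} (hr : 0 < r)
    (hF : IsDigitSeparated A r F) (c c' : ℕ → Bool) :
    |fBin c - fBin c'| ≤ 2 ^ (r * A) * |F c - F c'| ^ r := by
  have hfirst : ∀ c c' n, (∀ j < n, c j = c' j) → c n = true → c' n = false →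
      |fBin c - fBin c'| ≤ 2 ^ (r * A) * |F c - F c'| ^ r := by
    intro c c' n hag hc hc'
    have hsep := hF c c' n hag hc hc'
    calc |fBin c - fBin c'| ≤ (1 / 2) ^ n := abs_fBin_sub_le hag
      _ = 2 ^ (r * A) * ((1 / 2 : ℝ) ^ (A + n / r)) ^ r := by
        rw [← Real.rpow_mul (by norm_num), add_mul, div_mul_cancel₀ _ hr.ne', mul_comm A,
          Real.rpow_add (by norm_num), ← mul_assoc, Real.div_rpow zero_le_one zero_le_two,
          Real.one_rpow, mul_one_div_cancel (by positivity), one_mul, Real.rpow_natCast]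
      _ ≤ 2 ^ (r * A) * |F c - F c'| ^ r := by
        gcongr
        exact hsep.trans (le_abs_self _)
  by_cases hcc : c = c'
  · simp only [hcc, sub_self, abs_zero]
    positivity
  have hex : ∃ n, c n ≠ c' n := ne_iff.1 hcc
  have hag : ∀ j < Nat.find hex, c j = c' j := fun j hj => not_not.1 (Nat.find_min hex hj)
  cases hc : c (Nat.find hex)
  · rw [abs_sub_comm, abs_sub_comm (F c)]
    exact hfirst c' c _ (fun j hj => (hag j hj).symm)
      (by simpa [hc] using (Nat.find_spec hex).symm) hc
  · exact hfirst c c' _ hag hc (by simpa [hc] using (Nat.find_spec hex).symm)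

lemma dimH_range_fBin : dimH (range fBin) = 1 := by
  rw [range_fBin, Real.dimH_of_nonempty_interior (by simp)]
  simp

/-- Undoing `F` is a Hölder map of exponent `r` from `range F` onto `[0, 1]`. -/
lemma le_dimH_range_of_isDigitSeparated {F : (ℕ → Bool) → ℝ} {A : ℝ} {r : ℝ≥0} (hr : 0 < r)
    (hF : IsDigitSeparated A r F) : (r : ℝ≥0∞) ≤ dimH (range F) := by
  have hF' := abs_fBin_sub_le_of_isDigitSeparated (NNReal.coe_pos.2 hr) hF
  have hinv : ∀ c, F (invFun F (F c)) = F c := fun c => invFun_eq ⟨c, rfl⟩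
  have hholder : HolderOnWith (2 ^ (r * A) : ℝ).toNNReal r (fBin ∘ invFun F) (range F) := by
    rintro _ ⟨c, rfl⟩ _ ⟨c', rfl⟩
    have h := hF' (invFun F (F c)) (invFun F (F c'))
    rw [hinv, hinv] at h
    rw [edist_dist, edist_dist, Real.dist_eq, Real.dist_eq, comp_apply, comp_apply]
    calc ENNReal.ofReal |fBin (invFun F (F c)) - fBin (invFun F (F c'))|
        ≤ ENNReal.ofReal (2 ^ (r * A : ℝ) * |F c - F c'| ^ (r : ℝ)) := ENNReal.ofReal_le_ofReal h
      _ = _ := by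
        rw [ENNReal.ofReal_mul (by positivity),
          ENNReal.ofReal_rpow_of_nonneg (abs_nonneg _) r.coe_nonneg]
        rfl
  have hsurj : range fBin ⊆ (fBin ∘ invFun F) '' range F := by
    rintro _ ⟨c, rfl⟩
    refine ⟨F c, ⟨c, rfl⟩, ?_⟩
    have h := hF' (invFun F (F c)) c
    rw [hinv, sub_self, abs_zero, Real.zero_rpow (NNReal.coe_pos.2 hr).ne', mul_zero,
      abs_nonpos_iff, sub_eq_zero] at h
    exact h
  have hdim :=
    (dimH_range_fBin.symm.le.trans (dimH_mono hsurj)).trans (hholder.dimH_image_le hr)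
  rwa [ENNReal.le_div_iff_mul_le (Or.inl (by simpa using hr.ne')) (Or.inl ENNReal.coe_ne_top),
    one_mul] at hdim

/-- The position of the `j`-th free digit when `M` leading ones are followed by blocks of `L` free
digits and two ones. -/
def blockPos (L M j : ℕ) : ℕ := M + j + 2 * (j / L)

lemma blockPos_strictMono (L M : ℕ) : StrictMono (blockPos L M) := by
  intro a b hab
  have := Nat.div_le_div_right (c := L) hab.le
  unfold blockPos
  omega

lemma le_blockPos (L M j : ℕ) : M ≤ blockPos L M j := by
  unfold blockPos
  omega

lemma blockEnd_notMem_range_blockPos {L : ℕ} (hL : 0 < L) (M k t : ℕ) (ht : t < 2) :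
    M + (L + 2) * k + L + t ∉ range (blockPos L M) := by
  rintro ⟨j, hj⟩
  have hdecomp := Nat.div_add_mod j L
  have hmod := Nat.mod_lt j hL
  unfold blockPos at hj
  rcases Nat.lt_or_ge (j / L) (k + 1) with h | h
  · nlinarith [Nat.mul_le_mul_left L (Nat.lt_succ_iff.1 h)]
  · have := Nat.mul_le_mul_left L h
    rw [Nat.mul_succ] at this
    linarith [Nat.zero_le (j % L)]

lemma pow_le_fBin_blockPad_sub {L : ℕ} (hL : 0 < L) (M : ℕ) {c c' : ℕ → Bool} {n : ℕ}
    (hag : ∀ j < n, c j = c' j) (hc : c n = true) (hc' : c' n = false) :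
    (1 / 2 : ℝ) ^ (blockPos L M n + L + 1) ≤
      fBin (pad (blockPos L M) c) - fBin (pad (blockPos L M) c') := by
  have hdecomp := Nat.div_add_mod n L
  have hmod := Nat.mod_lt n hL
  have hlt : blockPos L M n < M + (L + 2) * (n / L) + L := by
    unfold blockPos
    linarith
  refine le_trans ?_ (pow_le_fBin_pad_sub (blockPos_strictMono L M) hag hc hc' hlt
    (blockEnd_notMem_range_blockPos hL M _ 0 two_pos))
  refine pow_le_pow_of_le_one (by norm_num) (by norm_num) ?_
  unfold blockPos
  linarith [Nat.zero_le (n % L)]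

lemma le_dimH_range_fBin_blockPad {L : ℕ} (hL : 0 < L) (M : ℕ) :
    ((L / (L + 2) : ℝ≥0) : ℝ≥0∞) ≤ dimH (range fun c => fBin (pad (blockPos L M) c)) := by
  refine le_dimH_range_of_isDigitSeparated (A := M + L + 1) (by positivity)
    fun c c' n hag hc hc' => ?_
  refine le_trans ?_ (pow_le_fBin_blockPad_sub hL M hag hc hc')
  rw [← Real.rpow_natCast]
  refine Real.rpow_le_rpow_of_exponent_ge (by norm_num) (by norm_num) ?_
  have hdiv : ((n / L : ℕ) : ℝ) ≤ n / L := Nat.cast_div_le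
  have hLpos : (0 : ℝ) < L := by exact_mod_cast hL
  have hexp : (n : ℝ) / (L / (L + 2)) = n + 2 * (n / L) := by
    field_simp
  simp only [blockPos, NNReal.coe_div, NNReal.coe_natCast, NNReal.coe_add, NNReal.coe_ofNat,
    hexp]
  push_cast
  linarith

lemma gBit_mem_Icc (c : Bool) {z : ℝ} (hz : z ∈ Icc (0 : ℝ) 1) : gBit c z ∈ Icc (0 : ℝ) 1 := by
  obtain ⟨h0, h1⟩ := hz
  cases c <;> simp only [gBit, Bool.false_eq_true, if_true, if_false] <;> constructor <;>
    nlinarith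

lemma gBit_le_two_mul (c : Bool) {z : ℝ} (hz : z ∈ Icc (0 : ℝ) 1) : gBit c z ≤ 2 * z := by
  obtain ⟨h0, h1⟩ := hz
  cases c <;> simp only [gBit, Bool.false_eq_true, if_true, if_false] <;> nlinarith

section pPre

variable {b : ℕ → Bool} {z : ℝ}

lemma pPre_mem_Icc (hz : z ∈ Icc (0 : ℝ) 1) (n : ℕ) : pPre b n z ∈ Icc (0 : ℝ) 1 := by
  induction n with
  | zero => exact hz
  | succ n ih => exact gBit_mem_Icc _ ih

lemma pPre_succ_of_true {s : ℕ} (hs : b s = true) : pPre b (s + 1) z = pPre b s z ^ 2 := by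
  simp [pPre, gBit, hs]

lemma pPre_of_forall_lt {M : ℕ} (hb : ∀ i < M, b i = true) : pPre b M z = z ^ 2 ^ M := by
  induction M with
  | zero => simp [pPre]
  | succ M ih => rw [pPre_succ_of_true (hb M M.lt_succ_self),
      ih fun i hi => hb i (hi.trans M.lt_succ_self), ← pow_mul, pow_succ]

lemma pPre_add_le (hz : z ∈ Icc (0 : ℝ) 1) (s j : ℕ) :
    pPre b (s + j) z ≤ 2 ^ j * pPre b s z := by
  induction j with
  | zero => simp
  | succ j ih =>
    calc pPre b (s + j + 1) z ≤ 2 * pPre b (s + j) z := gBit_le_two_mul _ (pPre_mem_Icc hz _)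
      _ ≤ 2 ^ (j + 1) * pPre b s z := by rw [pow_succ']; linarith

/-- Within a block the `L` free maps multiply by at most `2 ^ L` and the two squarings raise to the
fourth power, so the bound improves by a factor `1 / 2` per block. -/
lemma pPre_blockStart_le (hz : z ∈ Icc (0 : ℝ) 1) {L M : ℕ} (hL : 0 < L)
    (hM : pPre b M z ≤ (1 / 2) ^ (2 * L))
    (hb : ∀ k, b (M + (L + 2) * k + L) = true ∧ b (M + (L + 2) * k + L + 1) = true) (k : ℕ) :
    pPre b (M + (L + 2) * k) z ≤ (1 / 2) ^ (2 * L + k) := by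
  induction k with
  | zero => simpa using hM
  | succ k ih =>
    set s := M + (L + 2) * k
    have hfree : pPre b (s + L) z ≤ (1 / 2) ^ (L + k) :=
      calc pPre b (s + L) z ≤ 2 ^ L * pPre b s z := pPre_add_le hz s L
        _ ≤ 2 ^ L * (1 / 2) ^ (2 * L + k) := by gcongr
        _ = (1 / 2) ^ (L + k) := by
          rw [two_mul, add_assoc, pow_add, ← mul_assoc, ← mul_pow]
          norm_num
    have hsq : pPre b (M + (L + 2) * (k + 1)) z = pPre b (s + L) z ^ 4 := by
      rw [show M + (L + 2) * (k + 1) = s + L + 1 + 1 by ring, pPre_succ_of_true (hb k).2,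
        pPre_succ_of_true (hb k).1, ← pow_mul]
    rw [hsq]
    calc pPre b (s + L) z ^ 4 ≤ ((1 / 2) ^ (L + k)) ^ 4 := by
          gcongr
          exact (pPre_mem_Icc hz _).1
      _ ≤ (1 / 2) ^ (2 * L + (k + 1)) := by
          rw [← pow_mul]
          exact pow_le_pow_of_le_one (by norm_num) (by norm_num) (by omega)

lemma tendsto_pPre_zero_of_blocks (hz : z ∈ Icc (0 : ℝ) 1) {L M : ℕ} (hL : 0 < L)
    (hM : pPre b M z ≤ (1 / 2) ^ (2 * L))
    (hb : ∀ k, b (M + (L + 2) * k + L) = true ∧ b (M + (L + 2) * k + L + 1) = true) :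
    Tendsto (fun n => pPre b n z) atTop (𝓝 0) := by
  have hbound : ∀ n ≥ M, pPre b n z ≤ 2 * (1 / 2) ^ ((n - M) / (L + 2)) := by
    intro n hn
    have hn' : n = M + (L + 2) * ((n - M) / (L + 2)) + (n - M) % (L + 2) := by
      have := Nat.div_add_mod (n - M) (L + 2)
      omega
    set k := (n - M) / (L + 2)
    have hr := Nat.mod_lt (n - M) (show 0 < L + 2 by omega)
    calc pPre b n z ≤ 2 ^ ((n - M) % (L + 2)) * pPre b (M + (L + 2) * k) z :=
          (congrArg (pPre b · z) hn').trans_le (pPre_add_le hz _ _)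
      _ ≤ 2 ^ (L + 1) * (1 / 2) ^ (2 * L + k) := by
          gcongr
          exacts [(pPre_mem_Icc hz _).1, one_le_two, by omega, pPre_blockStart_le hz hL hM hb k]
      _ = 2 * ((1 / 2) ^ L * (1 / 2) ^ k) := by
          have h : (2 : ℝ) ^ L * (1 / 2) ^ L = 1 := by rw [← mul_pow]; norm_num
          rw [pow_succ, two_mul, pow_add, pow_add]
          linear_combination (2 * (1 / 2) ^ L * (1 / 2) ^ k : ℝ) * h
      _ ≤ 2 * (1 / 2) ^ k := by
          gcongr
          exact mul_le_of_le_one_left (by positivity) (pow_le_one₀ (by norm_num) (by norm_num))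
  have hlim : Tendsto (fun n : ℕ => 2 * (1 / 2 : ℝ) ^ ((n - M) / (L + 2))) atTop (𝓝 0) := by
    simpa using ((tendsto_pow_atTop_nhds_zero_of_lt_one (r := (1 / 2 : ℝ)) (by norm_num)
      (by norm_num)).comp
      ((Nat.tendsto_div_const_atTop (by omega)).comp (tendsto_sub_atTop_nat M))).const_mul 2
  exact squeeze_zero' (Eventually.of_forall fun n => (pPre_mem_Icc hz n).1)
    (eventually_atTop.2 ⟨M, hbound⟩) hlim

end pPre

lemma dimH_le_one (s : Set ℝ) : dimH s ≤ 1 :=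
  (dimH_mono (subset_univ s)).trans_eq Real.dimH_univ

lemma tendsto_pPre_blockPad_zero {ε : ℝ} (hε : ε ∈ Icc (0 : ℝ) 1) {L M : ℕ} (hL : 0 < L)
    (hM : ε ^ 2 ^ M ≤ (1 / 2) ^ (2 * L)) (c : ℕ → Bool) :
    Tendsto (fun n => pPre (pad (blockPos L M) c) n ε) atTop (𝓝 0) := by
  have hprefix : ∀ i < M, pad (blockPos L M) c i = true := fun i hi =>
    pad_apply_of_notMem_range fun ⟨j, hj⟩ => (le_blockPos L M j).not_gt (hj ▸ hi)
  refine tendsto_pPre_zero_of_blocks hε hL (by rwa [pPre_of_forall_lt hprefix]) fun k => ⟨?_, ?_⟩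
  · exact pad_apply_of_notMem_range (blockEnd_notMem_range_blockPos hL M k 0 two_pos)
  · exact pad_apply_of_notMem_range (blockEnd_notMem_range_blockPos hL M k 1 one_lt_two)

lemma dimH_Gset {ε : ℝ} (hε : ε ∈ Ioo (0 : ℝ) 1) : dimH (Gset ε) = 1 := by
  refine le_antisymm (dimH_le_one _) (ENNReal.le_of_forall_nnreal_lt fun t ht => ?_)
  obtain ⟨L, htL, hL⟩ := (((tendsto_natCast_div_add_atTop (2 : ℝ≥0)).eventually
    (lt_mem_nhds (by exact_mod_cast ht))).and (eventually_gt_atTop 0)).exists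
  obtain ⟨M, hM⟩ := (((tendsto_pow_atTop_nhds_zero_of_lt_one hε.1.le hε.2).comp
    (tendsto_pow_atTop_atTop_of_one_lt one_lt_two)).eventually
    (ge_mem_nhds (by positivity : (0 : ℝ) < (1 / 2) ^ (2 * L)))).exists
  have hsub : (range fun c => fBin (pad (blockPos L M) c)) ⊆ Gset ε := by
    rintro _ ⟨c, rfl⟩
    exact ⟨_, rfl, tendsto_pPre_blockPad_zero (Ioo_subset_Icc_self hε) hL hM c⟩
  calc (t : ℝ≥0∞) ≤ ((L / (L + 2) : ℝ≥0) : ℝ≥0∞) := by exact_mod_cast htL.le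
    _ ≤ _ := le_dimH_range_fBin_blockPad hL M
    _ ≤ _ := dimH_mono hsub

lemma gBit_not (c : Bool) (z : ℝ) : gBit (!c) (1 - z) = 1 - gBit c z := by
  cases c <;> simp only [gBit, Bool.not_true, Bool.not_false, Bool.false_eq_true, if_true,
    if_false] <;> ring

lemma pPre_not (b : ℕ → Bool) (z : ℝ) (n : ℕ) :
    pPre (fun i => !b i) n (1 - z) = 1 - pPre b n z := by
  induction n with
  | zero => rfl
  | succ n ih => simp only [pPre, ih, gBit_not]

lemma fBin_not (b : ℕ → Bool) : fBin (fun i => !b i) = 1 - fBin b := by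
  have hsum := (hasSum_fBin b).add (hasSum_fBin fun i => !b i)
  have hterms : (fun n => (if b n then (1 : ℝ) else 0) / 2 ^ (n + 1)
      + (if !b n then (1 : ℝ) else 0) / 2 ^ (n + 1)) = fun n => 1 / 2 ^ (n + 1) := by
    funext n
    cases b n <;> simp
  have hone := hasSum_fBin fun _ => true
  simp only [if_true, fBin_const_true, ← hterms] at hone
  linarith [hsum.unique hone]

lemma image_Gset_subset_Bset (ε : ℝ) : (fun x => 1 - x) '' Gset (1 - ε) ⊆ Bset ε := by
  rintro _ ⟨_, ⟨b, rfl, hb⟩, rfl⟩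
  refine ⟨fun i => !b i, fBin_not b, ?_⟩
  have h := (tendsto_const_nhds (x := (1 : ℝ))).sub hb
  simp_rw [← pPre_not, sub_sub_cancel, sub_zero] at h
  exact h

lemma dimH_Bset {ε : ℝ} (hε : ε ∈ Ioo (0 : ℝ) 1) : dimH (Bset ε) = 1 := by
  refine le_antisymm (dimH_le_one _) ?_
  calc 1 = dimH (Gset (1 - ε)) := (dimH_Gset ⟨sub_pos.2 hε.2, sub_lt_self 1 hε.1⟩).symm
    _ = dimH (IsometryEquiv.subLeft (1 : ℝ) '' Gset (1 - ε)) :=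
      (IsometryEquiv.dimH_image _ _).symm
    _ ≤ dimH (Bset ε) := dimH_mono (image_Gset_subset_Bset ε)

/-- The Hausdorff dimensions of the sets of good and bad channels are both `1`. -/
theorem good_bad_dimH :
    ∀ ε ∈ Set.Ioo (0 : ℝ) 1, dimH (Gset ε) = 1 ∧ dimH (Bset ε) = 1 :=
  fun _ hε => ⟨dimH_Gset hε, dimH_Bset hε⟩
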